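/- Let K be a nonarchimedean field and let A be a Banach algebra over K whose underlying ring is an integral domain. Suppose that for every non-zero x ∈ A there exists a constant c_x > 0 with ‖f‖ ≤ c_x·‖fx‖ for all f ∈ A (i.e. Core(A) = A). Then: (i) the spectral seminorm |·|_spc of A is a norm; and (ii) for every non-zero x ∈ A there exists a constant c > 0 such that |f|_spc ≤ c·|fx|_spc for all f ∈ A. -/

import Mathlib

open Filter Topology

/-! Iterating `‖f‖ ≤ c ‖f x‖` gives `‖f ^ n‖ ≤ c ^ n ‖(f x) ^ n‖`; taking `n`-th roots yields
`|f|_spc ≤ c |f x|_spc`. For `f = 1`, where `|1|_spc ≥ 1`, this gives `|x|_spc ≥ c⁻¹ > 0`. -/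

/-- The spectral seminorm `|x|_spc = inf_{n ≥ 1} ‖x^n‖^{1/n}` of a seminormed ring. -/
noncomputable def spcSeminorm {A : Type*} [SeminormedRing A] (x : A) : ℝ :=
  ⨅ n : ℕ, ‖x ^ (n + 1)‖ ^ (((n : ℝ) + 1)⁻¹)

section SeminormedRing

variable {A : Type*} [SeminormedRing A]

theorem spcSeminorm_le_norm_pow_rpow (x : A) (n : ℕ) :
    spcSeminorm x ≤ ‖x ^ (n + 1)‖ ^ (((n : ℝ) + 1)⁻¹) :=
  ciInf_le ⟨0, by rintro _ ⟨m, rfl⟩; positivity⟩ n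

theorem spcSeminorm_le_mul_of_norm_pow_le {f g : A} {C : ℝ} (hC : 0 ≤ C)
    (h : ∀ n : ℕ, ‖f ^ n‖ ≤ C ^ n * ‖g ^ n‖) :
    spcSeminorm f ≤ C * spcSeminorm g := by
  rw [spcSeminorm.eq_1 g, Real.mul_iInf_of_nonneg hC]
  refine le_ciInf fun n => (spcSeminorm_le_norm_pow_rpow f n).trans ?_
  have hn : ((n : ℝ) + 1) = ((n + 1 : ℕ) : ℝ) := by push_cast; ring
  calc ‖f ^ (n + 1)‖ ^ (((n : ℝ) + 1)⁻¹)
      ≤ (C ^ (n + 1) * ‖g ^ (n + 1)‖) ^ (((n : ℝ) + 1)⁻¹) := by gcongr; exact h (n + 1)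
    _ = C * ‖g ^ (n + 1)‖ ^ (((n : ℝ) + 1)⁻¹) := by
      rw [Real.mul_rpow (by positivity) (norm_nonneg _), hn,
        Real.pow_rpow_inv_natCast hC n.succ_ne_zero]

theorem norm_le_pow_mul_norm_mul_pow {x : A} {c : ℝ} (hc : 0 ≤ c)
    (h : ∀ f : A, ‖f‖ ≤ c * ‖f * x‖) (k : ℕ) (g : A) :
    ‖g‖ ≤ c ^ k * ‖g * x ^ k‖ := by
  induction k generalizing g with
  | zero => simp
  | succ k ih =>
    calc ‖g‖ ≤ c * ‖g * x‖ := h g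
      _ ≤ c * (c ^ k * ‖g * x * x ^ k‖) := by gcongr; exact ih (g * x)
      _ = c ^ (k + 1) * ‖g * x ^ (k + 1)‖ := by rw [mul_assoc g, ← pow_succ']; ring

end SeminormedRing

theorem one_le_spcSeminorm_one {A : Type*} [NormedRing A] [Nontrivial A] :
    1 ≤ spcSeminorm (1 : A) :=
  le_ciInf fun n => by
    rw [one_pow]
    exact Real.one_le_rpow (one_le_norm_one A) (by positivity)

theorem spcSeminorm_le_mul_spcSeminorm_mul {A : Type*} [SeminormedCommRing A] {x : A} {c : ℝ}
    (hc : 0 ≤ c) (h : ∀ f : A, ‖f‖ ≤ c * ‖f * x‖) (f : A) :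
    spcSeminorm f ≤ c * spcSeminorm (f * x) :=
  spcSeminorm_le_mul_of_norm_pow_le hc fun n => by
    simpa only [mul_pow] using norm_le_pow_mul_norm_mul_pow hc h n (f ^ n)

theorem core_and_spectral_seminorm {A : Type*}
    [NormedCommRing A]
    (hcore : ∀ x : A, x ≠ 0 → ∃ c > 0, ∀ f : A, ‖f‖ ≤ c * ‖f * x‖) :
    (∀ x : A, spcSeminorm x = 0 → x = 0) ∧
    (∀ x : A, x ≠ 0 → ∃ c > 0, ∀ f : A, spcSeminorm f ≤ c * spcSeminorm (f * x)) := by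
  have core_spc : ∀ x : A, x ≠ 0 → ∃ c > 0, ∀ f : A, spcSeminorm f ≤ c * spcSeminorm (f * x) :=
    fun x hx => by
      obtain ⟨c, hc, h⟩ := hcore x hx
      exact ⟨c, hc, spcSeminorm_le_mul_spcSeminorm_mul hc.le h⟩
  refine ⟨fun x hspc => ?_, core_spc⟩
  nontriviality A
  by_contra hx
  obtain ⟨c, -, h⟩ := core_spc x hx
  have := (one_le_spcSeminorm_one (A := A)).trans (h 1)
  rw [one_mul, hspc, mul_zero] at this
  linarith
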